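/- Let 1 ≤ p < ∞, and suppose the pair (φ₁, φ₂) of positive measurable functions on ℝⁿ×(0,∞) satisfies ∫_r^∞ (1 + ln(t/r))^k φ₁(x,t) (w^q(B(x,t)))^{-1/q} dt/t ≲ φ₂(x,r) (w^q(B(x,r)))^{-1/q} for all x, r. Suppose an operator T satisfies the local estimate ‖Tf‖_{L^q(w^q, B(x,r))} ≤ C (w^q(B(x,r)))^{1/q} ∫_r^∞ (1 + ln(t/r))^k ‖f‖_{L^p(w^p, B(x,t))} (w^q(B(x,t)))^{-1/q} dt/t for all balls B(x,r). Then ‖Tf‖_{M_{q,φ₂}(w^q)} ≲ ‖f‖_{M_{p,φ₁}(w^p)}. -/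

import Mathlib

open MeasureTheory ENNReal

/-- Local weighted `L^p` norm: `‖f‖_{L^p(v, B(x,r))} = (∫_{B(x,r)} |f|^p v)^(1/p)`. -/
noncomputable def localLpNorm {n : ℕ} (p : ℝ) (v : EuclideanSpace ℝ (Fin n) → ℝ≥0∞)
    (f : EuclideanSpace ℝ (Fin n) → ℝ) (x : EuclideanSpace ℝ (Fin n)) (r : ℝ) : ℝ≥0∞ :=
  (∫⁻ y in Metric.ball x r, (ENNReal.ofReal |f y|) ^ p * v y) ^ (1 / p)

/-- `w^q(B(x,r)) = ∫_{B(x,r)} w(y)^q dy`. -/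
noncomputable def wqBall {n : ℕ} (w : EuclideanSpace ℝ (Fin n) → ℝ≥0∞) (q : ℝ)
    (x : EuclideanSpace ℝ (Fin n)) (r : ℝ) : ℝ≥0∞ :=
  ∫⁻ y in Metric.ball x r, (w y) ^ q

/-- Generalized weighted Morrey norm `sup_{x,r>0} φ(x,r)⁻¹ ‖f‖_{L^p(B(x,r),v)}`. -/
noncomputable def morreyNorm {n : ℕ} (p : ℝ) (φ : EuclideanSpace ℝ (Fin n) → ℝ → ℝ≥0∞)
    (v : EuclideanSpace ℝ (Fin n) → ℝ≥0∞) (f : EuclideanSpace ℝ (Fin n) → ℝ) : ℝ≥0∞ :=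
  ⨆ (x : EuclideanSpace ℝ (Fin n)) (r : {r : ℝ // 0 < r}),
    (φ x r.1)⁻¹ * localLpNorm p v f x r.1

/-- Morrey-norm transference. If the pair `(φ₁, φ₂)` satisfies
`∫_r^∞ (1+ln(t/r))^k φ₁(x,t) (w^q(B(x,t)))^{-1/q} dt/t ≲ φ₂(x,r) (w^q(B(x,r)))^{-1/q}`,
and `T` satisfies the local estimate
`‖Tf‖_{L^q(w^q,B(x,r))} ≤ C (w^q(B(x,r)))^{1/q} ∫_r^∞ (1+ln(t/r))^k ‖f‖_{L^p(w^p,B(x,t))}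
(w^q(B(x,t)))^{-1/q} dt/t`, then `‖Tf‖_{M_{q,φ₂}(w^q)} ≲ ‖f‖_{M_{p,φ₁}(w^p)}`. -/
theorem stmt_8 (n : ℕ) (k : ℕ) (p q : ℝ) (hp : 1 ≤ p) (hpq : p ≤ q)
    (w : EuclideanSpace ℝ (Fin n) → ℝ≥0∞)
    (φ₁ φ₂ : EuclideanSpace ℝ (Fin n) → ℝ → ℝ≥0∞)
    (hpair : ∃ C₁ : ℝ≥0∞, C₁ < ∞ ∧ ∀ (x : EuclideanSpace ℝ (Fin n)) (r : ℝ), 0 < r →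
      (∫⁻ t in Set.Ioi r, (ENNReal.ofReal (1 + Real.log (t / r))) ^ k * φ₁ x t *
          (wqBall w q x t) ^ (-(1 / q)) * ENNReal.ofReal (1 / t)) ≤
        C₁ * φ₂ x r * (wqBall w q x r) ^ (-(1 / q)))
    (T : (EuclideanSpace ℝ (Fin n) → ℝ) → EuclideanSpace ℝ (Fin n) → ℝ)
    (hT : ∃ C₂ : ℝ≥0∞, C₂ < ∞ ∧ ∀ (f : EuclideanSpace ℝ (Fin n) → ℝ)
        (x : EuclideanSpace ℝ (Fin n)) (r : ℝ), 0 < r →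
      localLpNorm q (fun y => (w y) ^ q) (T f) x r ≤
        C₂ * (wqBall w q x r) ^ (1 / q) *
          ∫⁻ t in Set.Ioi r, (ENNReal.ofReal (1 + Real.log (t / r))) ^ k *
            localLpNorm p (fun y => (w y) ^ p) f x t *
            (wqBall w q x t) ^ (-(1 / q)) * ENNReal.ofReal (1 / t)) :
    ∃ C : ℝ≥0∞, C < ∞ ∧ ∀ f : EuclideanSpace ℝ (Fin n) → ℝ,
      morreyNorm q φ₂ (fun y => (w y) ^ q) (T f) ≤
        C * morreyNorm p φ₁ (fun y => (w y) ^ p) f := by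
  obtain ⟨C₁, hC₁, hpair⟩ := hpair
  obtain ⟨C₂, hC₂, hT⟩ := hT
  have hq : (0:ℝ) < q := lt_of_lt_of_le zero_lt_one (hp.trans hpq)
  refine ⟨C₁ * C₂ + 1, ENNReal.add_lt_top.2 ⟨ENNReal.mul_lt_top hC₁ hC₂, ENNReal.one_lt_top⟩, ?_⟩
  intro f
  set M := morreyNorm p φ₁ (fun y => (w y) ^ p) f with hMdef
  rcases eq_top_or_lt_top M with hMtop | hMlt
  · rw [hMtop, ENNReal.mul_top (by simp)]; exact le_top
  have hMle : ∀ (t : ℝ) (x : EuclideanSpace ℝ (Fin n)), 0 < t →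
      (φ₁ x t)⁻¹ * localLpNorm p (fun y => (w y) ^ p) f x t ≤ M := by
    intro t x ht
    exact le_iSup_of_le x (le_iSup_of_le (⟨t, ht⟩ : {r : ℝ // 0 < r}) le_rfl)
  refine iSup_le fun x => iSup_le fun r' => ?_
  obtain ⟨r, hr⟩ := r'
  simp only
  have hWmono : Monotone (wqBall w q x) := fun a b hab =>
    lintegral_mono_set (Metric.ball_subset_ball hab)
  have hLmono : Monotone (localLpNorm p (fun y => (w y) ^ p) f x) := fun a b hab =>
    ENNReal.rpow_le_rpow (lintegral_mono_set (Metric.ball_subset_ball hab))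
      (by positivity)
  rcases eq_or_ne (wqBall w q x r) 0 with hW0 | hWne0
  · have hTf0 := hT f x r hr
    rw [hW0, ENNReal.zero_rpow_of_pos (by positivity : (0:ℝ) < 1 / q)] at hTf0
    rw [mul_zero, zero_mul] at hTf0
    rw [le_zero_iff.mp hTf0, mul_zero]
    exact zero_le
  rcases eq_or_ne M 0 with hM0 | hMne0
  · -- M = 0
    have hL0 : ∀ t : ℝ, 0 < t →
        localLpNorm p (fun y => (w y) ^ p) f x t = 0 ∨ φ₁ x t = ∞ := by
      intro t ht
      have h := hMle t x ht
      rw [hM0, le_zero_iff] at h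
      rcases mul_eq_zero.mp h with h1 | h2
      · exact Or.inr (ENNReal.inv_eq_zero.mp h1)
      · exact Or.inl h2
    set S : Set ℝ := {t | r < t ∧ 0 < localLpNorm p (fun y => (w y) ^ p) f x t ∧
        wqBall w q x t < ∞} with hSdef
    have hSmeas : MeasurableSet S := by
      apply Set.OrdConnected.measurableSet
      constructor
      intro a ha b hb c hc
      exact ⟨lt_of_lt_of_le ha.1 hc.1, lt_of_lt_of_le ha.2.1 (hLmono hc.1),
        lt_of_le_of_lt (hWmono hc.2) hb.2.2⟩
    rcases eq_or_ne (volume S) 0 with hSvol | hSvol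
    · -- integral in hT vanishes
      have key : {t : ℝ | t ∈ Set.Ioi r →
          (ENNReal.ofReal (1 + Real.log (t / r))) ^ k *
            localLpNorm p (fun y => (w y) ^ p) f x t *
            (wqBall w q x t) ^ (-(1 / q)) * ENNReal.ofReal (1 / t) = 0}ᶜ ⊆ S := by
        intro t ht
        simp only [Set.mem_compl_iff, Set.mem_setOf_eq, not_forall] at ht
        obtain ⟨htr, hne⟩ := ht
        refine ⟨htr, ?_, ?_⟩
        · rw [pos_iff_ne_zero]
          intro h0
          exact hne (by rw [h0, mul_zero, zero_mul, zero_mul])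
        · by_contra h
          have hWt : wqBall w q x t = ∞ := top_le_iff.mp (not_lt.mp h)
          exact hne (by rw [hWt, ENNReal.top_rpow_of_neg (neg_lt_zero.mpr (by positivity)),
            mul_zero, zero_mul])
      have hae : ∀ᵐ t ∂(volume.restrict (Set.Ioi r)),
          (ENNReal.ofReal (1 + Real.log (t / r))) ^ k *
            localLpNorm p (fun y => (w y) ^ p) f x t *
            (wqBall w q x t) ^ (-(1 / q)) * ENNReal.ofReal (1 / t) = 0 := by
        refine (ae_restrict_iff' measurableSet_Ioi).mpr ?_
        exact mem_ae_iff.mpr (measure_mono_null key hSvol)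
      have hint : (∫⁻ t in Set.Ioi r, (ENNReal.ofReal (1 + Real.log (t / r))) ^ k *
            localLpNorm p (fun y => (w y) ^ p) f x t *
            (wqBall w q x t) ^ (-(1 / q)) * ENNReal.ofReal (1 / t)) = 0 := by
        rw [lintegral_congr_ae hae]; simp
      have hTf0 := hT f x r hr
      rw [hint, mul_zero] at hTf0
      rw [le_zero_iff.mp hTf0, mul_zero]
      exact zero_le
    · -- positive measure: φ₂ x r = ∞
      obtain ⟨t₀, ht₀⟩ := nonempty_of_measure_ne_zero hSvol
      have hWrlt : wqBall w q x r < ∞ := lt_of_le_of_lt (hWmono (le_of_lt ht₀.1)) ht₀.2.2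
      have hSint : (∫⁻ t in S, (ENNReal.ofReal (1 + Real.log (t / r))) ^ k * φ₁ x t *
          (wqBall w q x t) ^ (-(1 / q)) * ENNReal.ofReal (1 / t)) = ∞ := by
        have hpt : ∀ t ∈ S, (ENNReal.ofReal (1 + Real.log (t / r))) ^ k * φ₁ x t *
            (wqBall w q x t) ^ (-(1 / q)) * ENNReal.ofReal (1 / t) = (⊤ : ℝ≥0∞) := by
          intro t ht
          have htr : r < t := ht.1
          have htpos : 0 < t := hr.trans htr
          have hφtop : φ₁ x t = ∞ := by
            rcases hL0 t htpos with h | h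
            · exact absurd h (ne_of_gt ht.2.1)
            · exact h
          have hA : (ENNReal.ofReal (1 + Real.log (t / r))) ^ k ≠ 0 := by
            apply pow_ne_zero
            simp only [ne_eq, ENNReal.ofReal_eq_zero, not_le]
            have : (0:ℝ) ≤ Real.log (t / r) :=
              Real.log_nonneg (by rw [le_div_iff₀ hr]; linarith)
            linarith
          have hW' : (wqBall w q x t) ^ (-(1 / q)) ≠ 0 := by
            rw [ne_eq, ENNReal.rpow_eq_zero_iff]
            push_neg
            constructor
            · intro _; linarith [one_div_pos.mpr hq]
            · intro h; exact absurd h ht.2.2.ne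
          have hz : ENNReal.ofReal (1 / t) ≠ 0 := by
            simp only [ne_eq, ENNReal.ofReal_eq_zero, not_le]
            positivity
          rw [hφtop, ENNReal.mul_top hA, ENNReal.top_mul hW', ENNReal.top_mul hz]
        have heq : (∫⁻ t in S, (ENNReal.ofReal (1 + Real.log (t / r))) ^ k * φ₁ x t *
            (wqBall w q x t) ^ (-(1 / q)) * ENNReal.ofReal (1 / t)) =
            ∫⁻ _ in S, (⊤ : ℝ≥0∞) :=
          setLIntegral_congr_fun hSmeas hpt
        rw [heq, setLIntegral_const, ENNReal.top_mul hSvol]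
      have hIoi : (∫⁻ t in Set.Ioi r, (ENNReal.ofReal (1 + Real.log (t / r))) ^ k * φ₁ x t *
          (wqBall w q x t) ^ (-(1 / q)) * ENNReal.ofReal (1 / t)) = ∞ :=
        top_le_iff.mp (hSint ▸ lintegral_mono_set (fun t ht => ht.1))
      have hcmp := hpair x r hr
      rw [hIoi] at hcmp
      have hφ₂ : φ₂ x r = ∞ := by
        by_contra hne
        have hWne : (wqBall w q x r) ^ (-(1 / q)) ≠ ∞ := by
          rw [ne_eq, ENNReal.rpow_eq_top_iff]
          push_neg
          constructor
          · intro h; exact absurd h hWne0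
          · intro h; exact absurd h hWrlt.ne
        exact ENNReal.mul_ne_top (ENNReal.mul_ne_top hC₁.ne hne) hWne (top_le_iff.mp hcmp)
      rw [hφ₂, ENNReal.inv_top, zero_mul]
      exact zero_le
  · -- main case : 0 < M < ∞
    have hLbound : ∀ t : ℝ, 0 < t →
        localLpNorm p (fun y => (w y) ^ p) f x t ≤ M * φ₁ x t := by
      intro t ht
      rcases eq_or_ne (φ₁ x t) 0 with h0 | h0
      · have h := hMle t x ht
        rw [h0, ENNReal.inv_zero] at h
        have hL : localLpNorm p (fun y => (w y) ^ p) f x t = 0 := by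
          by_contra hL
          rw [ENNReal.top_mul hL] at h
          exact hMlt.ne (top_le_iff.mp h)
        rw [hL]; exact zero_le
      rcases eq_or_ne (φ₁ x t) ∞ with htop | htop
      · rw [htop, ENNReal.mul_top hMne0]; exact le_top
      · calc localLpNorm p (fun y => (w y) ^ p) f x t
            = (φ₁ x t) * ((φ₁ x t)⁻¹ * localLpNorm p (fun y => (w y) ^ p) f x t) := by
              rw [← mul_assoc, ENNReal.mul_inv_cancel h0 htop, one_mul]
          _ ≤ (φ₁ x t) * M := mul_le_mul_right (hMle t x ht) _
          _ = M * φ₁ x t := mul_comm _ _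
    have hint : (∫⁻ t in Set.Ioi r, (ENNReal.ofReal (1 + Real.log (t / r))) ^ k *
          localLpNorm p (fun y => (w y) ^ p) f x t *
          (wqBall w q x t) ^ (-(1 / q)) * ENNReal.ofReal (1 / t)) ≤
        M * (C₁ * φ₂ x r * (wqBall w q x r) ^ (-(1 / q))) := by
      calc (∫⁻ t in Set.Ioi r, (ENNReal.ofReal (1 + Real.log (t / r))) ^ k *
            localLpNorm p (fun y => (w y) ^ p) f x t *
            (wqBall w q x t) ^ (-(1 / q)) * ENNReal.ofReal (1 / t))
          ≤ ∫⁻ t in Set.Ioi r, M * ((ENNReal.ofReal (1 + Real.log (t / r))) ^ k * φ₁ x t *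
            (wqBall w q x t) ^ (-(1 / q)) * ENNReal.ofReal (1 / t)) := by
            apply lintegral_mono_ae
            apply ae_restrict_of_forall_mem measurableSet_Ioi
            intro t ht
            have h1 := hLbound t (hr.trans ht)
            calc (ENNReal.ofReal (1 + Real.log (t / r))) ^ k *
                  localLpNorm p (fun y => (w y) ^ p) f x t *
                  (wqBall w q x t) ^ (-(1 / q)) * ENNReal.ofReal (1 / t)
                ≤ (ENNReal.ofReal (1 + Real.log (t / r))) ^ k * (M * φ₁ x t) *
                  (wqBall w q x t) ^ (-(1 / q)) * ENNReal.ofReal (1 / t) :=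
                  mul_le_mul_left (mul_le_mul_left (mul_le_mul_right h1 _) _) _
              _ = M * ((ENNReal.ofReal (1 + Real.log (t / r))) ^ k * φ₁ x t *
                  (wqBall w q x t) ^ (-(1 / q)) * ENNReal.ofReal (1 / t)) := by ring
        _ = M * ∫⁻ t in Set.Ioi r, (ENNReal.ofReal (1 + Real.log (t / r))) ^ k * φ₁ x t *
            (wqBall w q x t) ^ (-(1 / q)) * ENNReal.ofReal (1 / t) :=
            lintegral_const_mul' _ _ hMlt.ne
        _ ≤ M * (C₁ * φ₂ x r * (wqBall w q x r) ^ (-(1 / q))) :=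
            mul_le_mul_right (hpair x r hr) _
    have hWW : (wqBall w q x r) ^ (1 / q) * (wqBall w q x r) ^ (-(1 / q)) ≤ 1 := by
      rcases eq_or_ne (wqBall w q x r) ∞ with hWt | hWt
      · rw [hWt, ENNReal.top_rpow_of_neg (neg_lt_zero.mpr (by positivity)), mul_zero]
        exact zero_le
      · rw [← ENNReal.rpow_add _ _ hWne0 hWt, add_neg_cancel, ENNReal.rpow_zero]
    have hTb := hT f x r hr
    calc (φ₂ x r)⁻¹ * localLpNorm q (fun y => (w y) ^ q) (T f) x r
        ≤ (φ₂ x r)⁻¹ * (C₂ * (wqBall w q x r) ^ (1 / q) *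
            (M * (C₁ * φ₂ x r * (wqBall w q x r) ^ (-(1 / q))))) :=
          mul_le_mul_right (hTb.trans (mul_le_mul_right hint _)) _
      _ = (C₁ * C₂ * M) * (((φ₂ x r)⁻¹ * φ₂ x r) *
            ((wqBall w q x r) ^ (1 / q) * (wqBall w q x r) ^ (-(1 / q)))) := by ring
      _ ≤ (C₁ * C₂ * M) * (1 * 1) :=
          mul_le_mul_right (mul_le_mul' (ENNReal.inv_mul_le_one _) hWW) _
      _ = C₁ * C₂ * M := by ring
      _ ≤ (C₁ * C₂ + 1) * M := mul_le_mul_left le_self_add _
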